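/- Consider the two-layer ReLU network with p-dimensional input, d hidden neurons, one-dimensional output, and design matrix S ∈ ℝ^{n×p}, with weight map ψ₂ : Θ → ℝⁿ. Then there exist finitely many linear subspaces V₁,…,V_m ⊆ ℝⁿ, each of dimension at most d·rank([S,𝟙]) + 1, such that ψ₂(Θ) ⊆ V₁ ∪ ⋯ ∪ V_m. -/

import Mathlib

open Matrix

/-- ReLU activation. -/
noncomputable def relu (x : ℝ) : ℝ := max x 0

/-- The weight map `ψ₂ : Θ → ℝⁿ` of the two-layer ReLU network with one-dimensional output,
`ν_θ(s) = cᵀ σ_max(A₁ s + b₁) + λ`, for the design matrix `S ∈ ℝ^{n×p}`. -/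
noncomputable def psi2 {p d n : ℕ} (S : Matrix (Fin n) (Fin p) ℝ)
    (θ : Matrix (Fin d) (Fin p) ℝ × (Fin d → ℝ) × (Fin d → ℝ) × ℝ) : Fin n → ℝ :=
  fun i => θ.2.2.1 ⬝ᵥ (fun l => relu (θ.1.mulVec (fun k => S i k) l + θ.2.1 l)) + θ.2.2.2

/-- The augmented matrix `[S, 𝟙] ∈ ℝ^{n×(p+1)}`. -/
noncomputable def aug {n p : ℕ} (S : Matrix (Fin n) (Fin p) ℝ) :
    Matrix (Fin n) (Fin (p + 1)) ℝ :=
  Matrix.of fun i => Fin.snoc (S i) 1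


/-- Coordinatewise masking by a Boolean pattern, as a linear map. -/
def maskMap {n : ℕ} (ε : Fin n → Bool) : (Fin n → ℝ) →ₗ[ℝ] (Fin n → ℝ) where
  toFun f := fun i => if ε i then f i else 0
  map_add' f g := by ext i; by_cases h : ε i <;> simp [h]
  map_smul' c f := by ext i; by_cases h : ε i <;> simp [h]

lemma finrank_finset_sup_le {ι : Type*} [DecidableEq ι] {V : Type*} [AddCommGroup V]
    [Module ℝ V] [FiniteDimensional ℝ V] (s : Finset ι) (W : ι → Submodule ℝ V) (r : ℕ)
    (h : ∀ i, Module.finrank ℝ (W i) ≤ r) :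
    Module.finrank ℝ (s.sup W : Submodule ℝ V) ≤ s.card * r := by
  classical
  induction s using Finset.induction_on with
  | empty => simp
  | insert _ _ hx ih =>
    rename_i a s
    rw [Finset.sup_insert, Finset.card_insert_of_notMem hx]
    calc Module.finrank ℝ ↥(W a ⊔ s.sup W)
        ≤ Module.finrank ℝ (W a) + Module.finrank ℝ (s.sup W : Submodule ℝ V) :=
          Submodule.finrank_add_le_finrank_add_finrank _ _
      _ ≤ r + s.card * r := add_le_add (h a) ih
      _ = (s.card + 1) * r := by ring

/-- The image of weights `ψ₂(Θ)` of a two-layer ReLU network with one-dimensional output is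
contained in a finite union of linear subspaces of `ℝⁿ`, each of dimension at most
`d·rank[S,𝟙] + 1`. -/
theorem image_of_weights_subset_union_subspaces {p d n : ℕ} (S : Matrix (Fin n) (Fin p) ℝ) :
    ∃ (m : ℕ) (V : Fin m → Submodule ℝ (Fin n → ℝ)),
      (∀ i, Module.finrank ℝ (V i) ≤ d * (aug S).rank + 1) ∧
      Set.range (psi2 (d := d) S) ⊆ ⋃ i, (V i : Set (Fin n → ℝ)) := by
    classical
  set E := Fin d → Fin n → Bool
  let e : E ≃ Fin (Fintype.card E) := Fintype.equivFin E
  -- masked column-space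
  let W : (Fin n → Bool) → Submodule ℝ (Fin n → ℝ) :=
    fun ε => (LinearMap.range (aug S).mulVecLin).map (maskMap ε)
  have hW : ∀ ε, Module.finrank ℝ (W ε) ≤ (aug S).rank := by
    intro ε
    exact Submodule.finrank_map_le _ _
  let Vfun : E → Submodule ℝ (Fin n → ℝ) :=
    fun ε => (⨆ l, W (ε l)) ⊔ (ℝ ∙ (fun _ => (1:ℝ) : Fin n → ℝ))
  refine ⟨Fintype.card E, fun i => Vfun (e.symm i), ?_, ?_⟩
  · intro i
    calc Module.finrank ℝ (Vfun (e.symm i))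
        ≤ Module.finrank ℝ ↥(⨆ l, W ((e.symm i) l))
          + Module.finrank ℝ (ℝ ∙ (fun _ => (1:ℝ) : Fin n → ℝ)) :=
          Submodule.finrank_add_le_finrank_add_finrank _ _
      _ ≤ d * (aug S).rank + 1 := by
          gcongr
          · have h1 : (⨆ l, W ((e.symm i) l)) = Finset.univ.sup (fun l => W ((e.symm i) l)) := by
              rw [Finset.sup_eq_iSup]; simp
            rw [h1]
            have := finrank_finset_sup_le (Finset.univ : Finset (Fin d))
              (fun l => W ((e.symm i) l)) ((aug S).rank) (fun l => hW _)
            simpa using this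
          · simpa using finrank_span_le_card ({(fun _ => (1:ℝ) : Fin n → ℝ)} : Set (Fin n → ℝ))
  · rintro _ ⟨θ, rfl⟩
    obtain ⟨A, b, c, lam⟩ := θ
    -- sign pattern
    set ε : E := fun l i => decide (0 ≤ A.mulVec (fun k => S i k) l + b l) with hε
    refine Set.mem_iUnion.mpr ⟨e ε, ?_⟩
    simp only [Equiv.symm_apply_apply]
    -- express psi2 as a sum of masked columns plus the constant
    have key : psi2 S (A, b, c, lam)
        = (∑ l, maskMap (ε l) ((aug S).mulVecLin (Fin.snoc (c l • A l) (c l * b l))))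
          + lam • (fun _ => (1:ℝ)) := by
      funext i
      simp only [psi2, Pi.add_apply, Finset.sum_apply, Pi.smul_apply, smul_eq_mul, mul_one]
      congr 1
      simp only [dotProduct]
      refine Finset.sum_congr rfl fun l _ => ?_
      have hmv : (aug S).mulVecLin (Fin.snoc (c l • A l) (c l * b l)) i
          = c l * (A.mulVec (fun k => S i k) l + b l) := by
        simp only [mulVecLin_apply, mulVec, dotProduct, aug, of_apply]
        rw [Fin.sum_univ_castSucc]
        simp [mulVec, dotProduct, mul_add, Finset.mul_sum, mul_comm, mul_left_comm]
      simp only [maskMap, LinearMap.coe_mk, AddHom.coe_mk, hmv, hε]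
      by_cases h : 0 ≤ A.mulVec (fun k => S i k) l + b l
      · simp [h, relu, max_eq_left h]
      · simp [h, relu, max_eq_right (le_of_not_ge h), mul_comm]
    rw [key]
    apply Submodule.add_mem_sup
    · exact Submodule.sum_mem _ fun l _ =>
        Submodule.mem_iSup_of_mem l ⟨_, ⟨_, rfl⟩, rfl⟩
    · exact Submodule.smul_mem _ _ (Submodule.mem_span_singleton_self _)
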